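/- Let S be a set of n points in ℝ^d (d ≥ 2). Suppose there is a hyperplane P such that S ∩ P spans at least c₁·|S ∩ P|^{d−1} distinct (d−2)-dimensional flats within P, and |S ∩ P| ≥ c₂·n. Let x = |S \ P|. Then the number of hyperplanes of ℝ^d spanned by S is at least γ·x·n^{d−1}, where γ > 0 depends only on c₁, c₂, and d. -/

import Mathlib

/-- A `k`-dimensional flat of `ℝ^d` spanned by a point set `S`: it is the affine span of
some subset of `S` and its direction has dimension `k`. -/
def SpannedFlats (d : ℕ) (S : Set (Fin d → ℝ)) (k : ℕ) :
    Set (AffineSubspace ℝ (Fin d → ℝ)) :=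
  {H | Module.finrank ℝ H.direction = k ∧ ∃ T ⊆ S, affineSpan ℝ T = H}

/-!
Let `M = S ∩ P`, `Q = S \ P`, and let `𝓕` be the nonempty `(d-2)`-flats of `P` spanned by `M`;
by saturation `|𝓕| ≳ c₁ |M|^(d-1)`. For `F ∈ 𝓕` and `q ∈ Q` the hyperplane `⟨F, q⟩` is spanned
by `S` and meets `P` exactly in `F`, so distinct flats give disjoint sets of hyperplanes. For a
fixed `F`, Cauchy–Schwarz bounds `|Q|²` by the number of hyperplanes `⟨F, q⟩` times the number
of pairs `(q, q')` with `⟨F, q⟩ = ⟨F, q'⟩`. A pair `q ≠ q'` collides for at most `|M|^(d-2)`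
flats, because the common hyperplane is spanned by `q`, `q'` and `d - 2` points of `M`. Summing
over `𝓕` and applying Cauchy–Schwarz again gives `(|𝓕| |Q|)² ≤ h (|𝓕| |Q| + |Q|² |M|^(d-2))`
for the number `h` of spanned hyperplanes, and whichever term dominates yields
`h ≳ |Q| n^(d-1)`, using `|M| ≥ c₂ n`.
-/

open Finset Module

section Collisions

variable {α β γ : Type*} [DecidableEq γ]

theorem card_collisions_eq_sum_sq (X : Finset α) (f : α → γ) :
    #{ab ∈ X ×ˢ X | f ab.1 = f ab.2} = ∑ c ∈ X.image f, #{a ∈ X | f a = c} ^ 2 := by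
  rw [card_eq_sum_card_fiberwise (f := fun ab => f ab.1) (t := X.image f)
    fun ab hab => mem_image_of_mem f (mem_product.1 (mem_filter.1 hab).1).1]
  refine sum_congr rfl fun c _ => ?_
  rw [sq, ← card_product]
  congr 1
  ext ⟨a, b⟩
  simp only [mem_filter, mem_product]
  grind

theorem sq_card_le_card_image_mul_card_collisions (X : Finset α) (f : α → γ) :
    #X ^ 2 ≤ #(X.image f) * #{ab ∈ X ×ˢ X | f ab.1 = f ab.2} := by
  rw [card_collisions_eq_sum_sq, card_eq_sum_card_image f X]
  exact sq_sum_le_card_mul_sum_sq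

theorem sum_card_collisions_le (X : Finset α) (𝓕 : Finset β) (e : β → α → γ)
    {B : ℕ} (hB : ∀ a ∈ X, ∀ b ∈ X, a ≠ b → #{F ∈ 𝓕 | e F a = e F b} ≤ B) :
    ∑ F ∈ 𝓕, #{ab ∈ X ×ˢ X | e F ab.1 = e F ab.2} ≤ #𝓕 * #X + #X ^ 2 * B := by
  classical
  calc ∑ F ∈ 𝓕, #{ab ∈ X ×ˢ X | e F ab.1 = e F ab.2}
      = ∑ ab ∈ X ×ˢ X, #{F ∈ 𝓕 | e F ab.1 = e F ab.2} :=
        sum_card_bipartiteAbove_eq_sum_card_bipartiteBelow _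
    _ ≤ ∑ ab ∈ X ×ˢ X, ((if ab.1 = ab.2 then #𝓕 else 0) + B) := by
        gcongr with ab hab
        split_ifs with h
        · exact (card_filter_le _ _).trans (Nat.le_add_right _ _)
        · have := mem_product.1 hab
          exact (hB _ this.1 _ this.2 h).trans (Nat.le_add_left _ _)
    _ = #𝓕 * #X + #X ^ 2 * B := by
        rw [sum_add_distrib, sum_product, sum_const, card_product]
        simp [sum_ite_eq, sq, mul_comm]

theorem sq_card_mul_card_le_card_biUnion_mul (X : Finset α) (𝓕 : Finset β) (e : β → α → γ) {B : ℕ}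
    (hinj : ∀ F ∈ 𝓕, ∀ F' ∈ 𝓕, ∀ a ∈ X, ∀ a' ∈ X, e F a = e F' a' → F = F')
    (hB : ∀ a ∈ X, ∀ b ∈ X, a ≠ b → #{F ∈ 𝓕 | e F a = e F b} ≤ B) :
    (#𝓕 * #X) ^ 2 ≤ #(𝓕.biUnion fun F => X.image (e F)) * (#𝓕 * #X + #X ^ 2 * B) := by
  have hdisj : (𝓕 : Set β).PairwiseDisjoint fun F => X.image (e F) := by
    intro F hF F' hF' hne
    simp only [Function.onFun, disjoint_left, mem_image]
    rintro _ ⟨a, ha, rfl⟩ ⟨a', ha', h⟩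
    exact hne (hinj F hF F' hF' a ha a' ha' h.symm)
  calc (#𝓕 * #X) ^ 2 = (∑ _F ∈ 𝓕, #X) ^ 2 := by rw [sum_const, smul_eq_mul]
    _ ≤ (∑ F ∈ 𝓕, #(X.image (e F))) * ∑ F ∈ 𝓕, #{ab ∈ X ×ˢ X | e F ab.1 = e F ab.2} :=
        sum_sq_le_sum_mul_sum_of_sq_le_mul _ (fun _ _ => Nat.zero_le _)
          (fun _ _ => Nat.zero_le _) fun F _ => sq_card_le_card_image_mul_card_collisions X (e F)
    _ ≤ _ := by
        rw [card_biUnion hdisj]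
        gcongr
        exact sum_card_collisions_le X 𝓕 e hB

end Collisions

section Geometry

variable {k V P : Type*} [Field k] [AddCommGroup V] [Module k V] [AddTorsor V P]

namespace AffineSubspace

theorem affineSpan_insert_inf_eq {s F : AffineSubspace k P} {f q : P} (hf : f ∈ F)
    (hFs : F ≤ s) (hq : q ∉ s) : affineSpan k (insert q (F : Set P)) ⊓ s = F := by
  refine le_antisymm ?_ (le_inf ?_ hFs)
  · rintro z ⟨hz, hzs : z ∈ s⟩
    obtain ⟨r, p, hp, rfl⟩ := (mem_affineSpan_insert_iff hf q z).1 hz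
    rcases eq_or_ne r 0 with rfl | hr
    · simpa using hp
    · rw [vadd_mem_iff_mem_direction _ (hFs hp), Submodule.smul_mem_iff _ hr,
        vsub_right_mem_direction_iff_mem (hFs hf)] at hzs
      exact absurd hzs hq
  · conv_lhs => rw [← affineSpan_coe F]
    exact affineSpan_mono k (Set.subset_insert _ _)

theorem finrank_direction_affineSpan_insert [FiniteDimensional k V] {F : AffineSubspace k P}
    {f q : P} (hf : f ∈ F) (hq : q ∉ F) :
    finrank k (affineSpan k (insert q (F : Set P))).direction = finrank k F.direction + 1 := by
  rw [direction_affineSpan_insert hf, sup_comm, Submodule.finrank_sup_span_singleton]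
  rwa [vsub_right_mem_direction_iff_mem hf]

theorem eq_of_affineSpan_insert_eq {s F F' : AffineSubspace k P} {f f' q q' : P} (hf : f ∈ F)
    (hf' : f' ∈ F') (hFs : F ≤ s) (hF's : F' ≤ s) (hq : q ∉ s) (hq' : q' ∉ s)
    (h : affineSpan k (insert q (F : Set P)) = affineSpan k (insert q' (F' : Set P))) :
    F = F' := by
  rw [← affineSpan_insert_inf_eq hf hFs hq, ← affineSpan_insert_inf_eq hf' hF's hq', h]

end AffineSubspace

open AffineSubspace

/- `⊥ = affineSpan k ∅` has a zero-dimensional direction, so for `d = 2` it is among the spanned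
`(d-2)`-flats; it must be discarded, since `⟨⊥, q⟩` is a point rather than a hyperplane. -/
theorem exists_finset_nonempty_of_exists_ne_bot {A : Set (AffineSubspace k P)} (hA : A.Finite)
    (hne : ∃ F ∈ A, F ≠ ⊥) :
    ∃ 𝓕 : Finset (AffineSubspace k P), (∀ F ∈ 𝓕, (F : Set P).Nonempty ∧ F ∈ A) ∧
      A.ncard ≤ 2 * #𝓕 := by
  classical
  refine ⟨hA.toFinset.erase ⊥, fun F hF => ⟨nonempty_iff_ne_bot F |>.2 (ne_of_mem_erase hF),
    hA.mem_toFinset.1 (mem_of_mem_erase hF)⟩, ?_⟩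
  obtain ⟨F, hF, hF0⟩ := hne
  have := card_pos.2 ⟨F, mem_erase.2 ⟨hF0, hA.mem_toFinset.2 hF⟩⟩
  have := pred_card_le_card_erase (s := hA.toFinset) (a := ⊥)
  rw [Set.ncard_eq_toFinset_card _ hA]
  omega

theorem exists_mem_setOf_affineSpan_ne_bot {s : AffineSubspace k P} {M : Set P} {z : P}
    (hzM : z ∈ M) (hzs : z ∈ s) {r : ℕ}
    (hpos : 0 < {H | H ≤ s ∧ finrank k H.direction = r ∧ ∃ T ⊆ M, affineSpan k T = H}.ncard) :
    ∃ F ∈ {H | H ≤ s ∧ finrank k H.direction = r ∧ ∃ T ⊆ M, affineSpan k T = H}, F ≠ ⊥ := by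
  rcases Nat.eq_zero_or_pos r with rfl | hr
  · refine ⟨affineSpan k {z}, ⟨affineSpan_le.2 (Set.singleton_subset_iff.2 hzs),
      by simp [direction_affineSpan], {z}, Set.singleton_subset_iff.2 hzM, rfl⟩, by simp⟩
  · obtain ⟨F, hF⟩ := Set.nonempty_of_ncard_ne_zero hpos.ne'
    refine ⟨F, hF, fun hF0 => ?_⟩
    have := hF.2.1
    rw [hF0, direction_bot, finrank_bot] at this
    omega

theorem exists_subset_affineSpan_insert_insert_eq (T : Finset P) {q q' : P} (hne : q' ≠ q)
    (hq' : q' ∈ affineSpan k (insert q (T : Set P))) :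
    ∃ U ⊆ T, #U + 1 = finrank k (affineSpan k (insert q (T : Set P))).direction ∧
      affineSpan k (insert q (insert q' (U : Set P))) = affineSpan k (insert q (T : Set P)) := by
  classical
  set H := affineSpan k (insert q (T : Set P))
  set v : P → V := (· -ᵥ q)
  have hqH : q ∈ H := mem_affineSpan k (Set.mem_insert q _)
  obtain ⟨b, hbt, hq'b, hspan, hli⟩ := exists_linearIndepOn_extension (v := v)
    ((linearIndepOn_singleton_iff k).2 (vsub_ne_zero.2 hne)) (Set.singleton_subset_iff.2
      (Set.mem_insert q' (T : Set P)))
  have hbH : Submodule.span k (v '' b) = H.direction := by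
    refine le_antisymm (Submodule.span_le.2 ?_) ?_
    · rintro _ ⟨p, hp, rfl⟩
      refine vsub_mem_direction ?_ hqH
      rcases hbt hp with rfl | hp
      · exact hq'
      · exact mem_affineSpan k (Set.mem_insert_of_mem q hp)
    · rw [direction_affineSpan, vectorSpan_eq_span_vsub_set_right k (Set.mem_insert q _),
        Submodule.span_le]
      rintro _ ⟨p, rfl | hp, rfl⟩
      · simp
      · exact hspan ⟨p, Set.mem_insert_of_mem q' hp, rfl⟩
  have hbfin : b.Finite := ((T : Set P).toFinite.insert q').subset hbt
  set B := hbfin.toFinset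
  have hBb : (B : Set P) = b := hbfin.coe_toFinset
  have hq'B : q' ∈ B := hbfin.mem_toFinset.2 (Set.singleton_subset_iff.1 hq'b)
  refine ⟨B.erase q', fun p hp => ?_, ?_, ?_⟩
  · rcases hbt (hbfin.mem_toFinset.1 (mem_of_mem_erase hp)) with rfl | hp'
    · exact absurd rfl (ne_of_mem_erase hp)
    · exact hp'
  · rw [card_erase_add_one hq'B, ← hbH, ← hBb, ← coe_image,
      finrank_span_finset_eq_card (by rw [coe_image, hBb]; exact hli.id_image),
      card_image_of_injective _ (vsub_left_injective q)]
  · rw [coe_erase, Set.insert_sdiff_singleton, Set.insert_eq_of_mem (mem_coe.2 hq'B), hBb]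
    refine ext_of_direction_eq ?_ ⟨q, mem_affineSpan k (Set.mem_insert q _), hqH⟩
    rw [← hbH, direction_affineSpan, vectorSpan_eq_span_vsub_set_right k (Set.mem_insert q _),
      Set.image_insert_eq, vsub_self, Submodule.span_insert_zero]

variable [FiniteDimensional k V]

open scoped Classical in
theorem card_filter_mem_affineSpan_insert_le {s : AffineSubspace k P} (M : Finset P)
    (𝓕 : Finset (AffineSubspace k P)) {r : ℕ}
    (h𝓕 : ∀ F ∈ 𝓕, (F : Set P).Nonempty ∧ F ≤ s ∧ finrank k F.direction = r ∧
      ∃ T ⊆ (M : Set P), affineSpan k T = F)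
    {q q' : P} (hq : q ∉ s) (hne : q' ≠ q) :
    #(𝓕.filter fun F : AffineSubspace k P => q' ∈ affineSpan k (insert q (F : Set P))) ≤
      #M ^ r := by
  let spanWith (U : Finset P) := affineSpan k (insert q (insert q' (U : Set P)))
  calc _ ≤ #((M.powersetCard r).image spanWith) := by
        refine card_le_card_of_injOn (fun F => affineSpan k (insert q (F : Set P)))
          (fun F hF => ?_) fun F hF F' hF' h => ?_
        · obtain ⟨hF, hq'F⟩ := mem_filter.1 hF
          obtain ⟨⟨f, hf⟩, hFs, hr, T, hTM, rfl⟩ := h𝓕 F hF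
          obtain ⟨T, rfl⟩ := (M.finite_toSet.subset hTM).exists_finset_coe
          rw [affineSpan_insert_affineSpan] at hq'F
          obtain ⟨U, hUT, hU, hspan⟩ := exists_subset_affineSpan_insert_insert_eq T hne hq'F
          rw [← affineSpan_insert_affineSpan,
            finrank_direction_affineSpan_insert hf fun h => hq (hFs h), hr] at hU
          refine mem_coe.2 (mem_image.2 ⟨U, mem_powersetCard.2 ⟨hUT.trans (coe_subset.1 hTM), ?_⟩,
            hspan.trans (affineSpan_insert_affineSpan k q _).symm⟩)
          omega
        · obtain ⟨⟨f, hf⟩, hFs, -⟩ := h𝓕 F (mem_filter.1 hF).1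
          obtain ⟨⟨f', hf'⟩, hF's, -⟩ := h𝓕 F' (mem_filter.1 hF').1
          exact eq_of_affineSpan_insert_eq hf hf' hFs hF's hq hq h
    _ ≤ #(M.powersetCard r) := card_image_le
    _ ≤ #M ^ r := by rw [card_powersetCard]; exact Nat.choose_le_pow _ _

theorem sq_card_mul_card_le_ncard_setOf_affineSpan {s : AffineSubspace k P} {S : Set P}
    (hS : S.Finite) (M Q : Finset P) (hM : (M : Set P) ⊆ S) (hQ : (Q : Set P) ⊆ S \ s)
    (𝓕 : Finset (AffineSubspace k P)) {r : ℕ}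
    (h𝓕 : ∀ F ∈ 𝓕, (F : Set P).Nonempty ∧ F ≤ s ∧ finrank k F.direction = r ∧
      ∃ T ⊆ (M : Set P), affineSpan k T = F) :
    (#𝓕 * #Q) ^ 2 ≤ {H : AffineSubspace k P | finrank k H.direction = r + 1 ∧
      ∃ T ⊆ S, affineSpan k T = H}.ncard * (#𝓕 * #Q + #Q ^ 2 * #M ^ r) := by
  classical
  refine (sq_card_mul_card_le_card_biUnion_mul Q 𝓕 (fun F q => affineSpan k (insert q (F : Set P)))
    (fun F hF F' hF' q hq q' hq' h => ?_) fun q hq q' hq' hne => ?_).trans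
    (Nat.mul_le_mul_right _ ?_)
  · obtain ⟨⟨f, hf⟩, hFs, -⟩ := h𝓕 F hF
    obtain ⟨⟨f', hf'⟩, hF's, -⟩ := h𝓕 F' hF'
    exact eq_of_affineSpan_insert_eq hf hf' hFs hF's (hQ hq).2 (hQ hq').2 h
  · refine (card_le_card fun F hF => ?_).trans
      (card_filter_mem_affineSpan_insert_le M 𝓕 h𝓕 (hQ hq).2 hne.symm)
    obtain ⟨hF, h⟩ := mem_filter.1 hF
    exact mem_filter.2 ⟨hF, h ▸ mem_affineSpan k (Set.mem_insert q' _)⟩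
  · rw [← Set.ncard_coe_finset]
    refine Set.ncard_le_ncard ?_ ((hS.finite_subsets.image (affineSpan k)).subset fun _ h => h.2)
    simp only [coe_biUnion, coe_image, Set.iUnion_subset_iff, Set.image_subset_iff]
    intro F hF q hq
    obtain ⟨⟨f, hf⟩, hFs, hFr, T, hTM, rfl⟩ := h𝓕 F hF
    refine ⟨?_, insert q T, Set.insert_subset (hQ hq).1 (hTM.trans hM),
      (affineSpan_insert_affineSpan k q T).symm⟩
    rw [finrank_direction_affineSpan_insert hf fun h => (hQ hq).2 (hFs h), hFr]

end Geometry

theorem le_two_mul_or_sq_le_two_mul_mul {a c h : ℝ} (ha : 0 < a) (hc : 0 ≤ c)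
    (H : a ^ 2 ≤ h * (a + c)) : a ≤ 2 * h ∨ a ^ 2 ≤ 2 * h * c := by
  have hh : 0 < h := by nlinarith
  rcases le_total c a with hca | hac
  · left; nlinarith
  · right; nlinarith

theorem min_mul_mul_pow_le {d : ℕ} (hd : 2 ≤ d) {c₁ c₂ n m x N h : ℝ} (hc₁ : 0 < c₁)
    (hc₂ : 0 < c₂) (hx : 0 < x) (hxn : x ≤ n) (hm : c₂ * n ≤ m)
    (hN : c₁ * m ^ (d - 1) ≤ 2 * N) (H : (N * x) ^ 2 ≤ h * (N * x + x ^ 2 * m ^ (d - 2))) :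
    min (c₁ * c₂ ^ (d - 1) / 4) (c₁ ^ 2 * c₂ ^ d / 8) * x * n ^ (d - 1) ≤ h := by
  have hn : 0 < n := hx.trans_le hxn
  have hm0 : 0 < m := (mul_pos hc₂ hn).trans_le hm
  have hN0 : 0 < N := by nlinarith [pow_pos hm0 (d - 1)]
  have hpow (j : ℕ) : c₂ ^ j * n ^ j ≤ m ^ j := by
    rw [← mul_pow]; exact pow_le_pow_left₀ (by positivity) hm j
  rcases le_two_mul_or_sq_le_two_mul_mul (by positivity) (by positivity) H with hrich | hsat
  · calc min (c₁ * c₂ ^ (d - 1) / 4) (c₁ ^ 2 * c₂ ^ d / 8) * x * n ^ (d - 1)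
        ≤ c₁ * c₂ ^ (d - 1) / 4 * x * n ^ (d - 1) := by gcongr; exact min_le_left _ _
      _ = c₁ * (c₂ ^ (d - 1) * n ^ (d - 1)) * x / 4 := by ring
      _ ≤ c₁ * m ^ (d - 1) * x / 4 := by gcongr; exact hpow _
      _ ≤ h := by nlinarith
  · have hN2 : N ^ 2 * x ^ 2 ≤ 2 * h * m ^ (d - 2) * x ^ 2 := by linarith
    replace hN2 := le_of_mul_le_mul_right hN2 (by positivity)
    have hsq : (c₁ * m ^ (d - 1)) ^ 2 = c₁ ^ 2 * m ^ d * m ^ (d - 2) := by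
      rw [mul_pow, ← pow_mul, mul_assoc, ← pow_add]; congr 2; omega
    have hmd : c₁ ^ 2 * m ^ d * m ^ (d - 2) ≤ 8 * h * m ^ (d - 2) := by
      rw [← hsq]
      nlinarith [pow_le_pow_left₀ (by positivity) hN 2]
    replace hmd := le_of_mul_le_mul_right hmd (by positivity)
    calc min (c₁ * c₂ ^ (d - 1) / 4) (c₁ ^ 2 * c₂ ^ d / 8) * x * n ^ (d - 1)
        ≤ c₁ ^ 2 * c₂ ^ d / 8 * n * n ^ (d - 1) := by gcongr; exact min_le_right _ _
      _ = c₁ ^ 2 * (c₂ ^ d * n ^ d) / 8 := by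
          rw [mul_assoc _ n, ← pow_succ', Nat.sub_add_cancel (by omega : 1 ≤ d)]; ring
      _ ≤ c₁ ^ 2 * m ^ d / 8 := by gcongr; exact hpow d
      _ ≤ h := by linarith

/-- higher-dimensional Erdős–Beck, Theorem 3: if `S` is a set of `n` points in
`ℝ^d` and `P` is a hyperplane such that `S ∩ P` spans at least `c₁·|S ∩ P|^(d-1)` distinct
`(d-2)`-flats within `P`, and `|S ∩ P| ≥ c₂·n`, then with `x = |S \ P|`, the number of
hyperplanes spanned by `S` is at least `γ·x·n^(d-1)` with `γ > 0` depending only on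
`c₁, c₂, d`. -/
theorem erdos_beck_higher_dim (d : ℕ) (hd : 2 ≤ d) (c₁ c₂ : ℝ) (hc₁ : 0 < c₁) (hc₂ : 0 < c₂) :
    ∃ γ : ℝ, 0 < γ ∧
      ∀ (n : ℕ) (S : Finset (Fin d → ℝ)) (P : AffineSubspace ℝ (Fin d → ℝ)),
        S.card = n →
        Module.finrank ℝ P.direction = d - 1 →
        (({H : AffineSubspace ℝ (Fin d → ℝ) | H ≤ P ∧
            Module.finrank ℝ H.direction = d - 2 ∧
            ∃ T ⊆ ((↑S : Set (Fin d → ℝ)) ∩ ↑P), affineSpan ℝ T = H}.ncard : ℝ)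
          ≥ c₁ * (((↑S : Set (Fin d → ℝ)) ∩ ↑P).ncard : ℝ) ^ (d - 1)) →
        ((((↑S : Set (Fin d → ℝ)) ∩ ↑P).ncard : ℝ) ≥ c₂ * n) →
        ((SpannedFlats d ↑S (d - 1)).ncard : ℝ)
          ≥ γ * (((↑S : Set (Fin d → ℝ)) \ ↑P).ncard : ℝ) * (n : ℝ) ^ (d - 1) := by
  classical
  refine ⟨min (c₁ * c₂ ^ (d - 1) / 4) (c₁ ^ 2 * c₂ ^ d / 8), by positivity, ?_⟩
  rintro n S P rfl - hsat hrich
  set M := S.filter (· ∈ P)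
  set Q := S.filter (· ∉ P)
  have hSM : (S : Set (Fin d → ℝ)) ∩ P = M := by ext; simp [M]
  have hSQ : (S : Set (Fin d → ℝ)) \ P = Q := by ext; simp [Q]
  rw [hSM, Set.ncard_coe_finset] at hsat hrich
  rw [hSQ, Set.ncard_coe_finset]
  set A : Set (AffineSubspace ℝ (Fin d → ℝ)) := {H | H ≤ P ∧ finrank ℝ H.direction = d - 2 ∧
    ∃ T ⊆ (M : Set (Fin d → ℝ)), affineSpan ℝ T = H}
  have hA : A.Finite :=
    (M.finite_toSet.finite_subsets.image (affineSpan ℝ)).subset fun _ h => h.2.2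
  rcases Nat.eq_zero_or_pos #Q with hQ | hx
  · simp [hQ]
  have hxn : #Q ≤ #S := card_filter_le _ _
  have hm : (0 : ℝ) < #M := (mul_pos hc₂ (by exact_mod_cast hx.trans_le hxn)).trans_le hrich
  obtain ⟨z, hz⟩ := card_pos.1 (by exact_mod_cast hm)
  have hne := exists_mem_setOf_affineSpan_ne_bot (mem_coe.2 hz) (mem_filter.1 hz).2
    (by exact_mod_cast (mul_pos hc₁ (pow_pos hm _)).trans_le hsat : 0 < A.ncard)
  obtain ⟨𝓕, h𝓕, hN⟩ := exists_finset_nonempty_of_exists_ne_bot hA hne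
  have hcount := sq_card_mul_card_le_ncard_setOf_affineSpan S.finite_toSet M Q
    (fun z hz => (mem_filter.1 hz).1) (fun z hz => mem_filter.1 hz) 𝓕 h𝓕
  rw [show d - 2 + 1 = d - 1 by omega] at hcount
  refine min_mul_mul_pow_le (N := #𝓕) hd hc₁ hc₂ (by exact_mod_cast hx)
    (by exact_mod_cast hxn) hrich (hsat.trans (by exact_mod_cast hN)) ?_
  exact_mod_cast hcount
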